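/- On ℂ^2 ⊗ ℂ^4 (control qubit first), define C_in = |0⟩⟨0| ⊗ (Z⊗I₂) + |1⟩⟨1| ⊗ I₄, and let U_{X²}(π/2) = exp(−i(π/8)(ΣᵢXᵢ)²) and U_{Y²}(π/2) = exp(−i(π/8)(ΣᵢYᵢ)²) be the three-qubit Mølmer–Sørensen gates (the sums running over all three qubits). Define V₁ = C_in · U_{X²}(π/2) and V₂ = C_in · U_{Y²}(π/2), and for any 4×4 matrix ρ let F_j(ρ) = tr_c[ V_j (|1⟩⟨1| ⊗ ρ) V_j† ] denote the result of applying V_j with the ancilla reset to |1⟩ and then tracing out the ancilla (the sum of the two diagonal 4×4 blocks). Then for every density matrix ρ on ℂ^4, F₂(F₁(ρ)) = |Ψ⁻⟩⟨Ψ⁻|, where |Ψ⁻⟩ = (|01⟩ − |10⟩)/√2: the simplified pumping circuit with a single MS gate per control cycle deterministically prepares the singlet Bell state. -/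

import Mathlib

open Matrix
open Kronecker
open scoped ComplexOrder

/-- Pauli matrices. -/
def PX : Matrix (Fin 2) (Fin 2) ℂ := !![0, 1; 1, 0]
def PY : Matrix (Fin 2) (Fin 2) ℂ := !![0, -Complex.I; Complex.I, 0]
def PZ : Matrix (Fin 2) (Fin 2) ℂ := !![1, 0; 0, -1]

/-- Collective spin operators `S_x` and `S_y` on three qubits (control first). -/
def Sx3 : Matrix (Fin 2 × (Fin 2 × Fin 2)) (Fin 2 × (Fin 2 × Fin 2)) ℂ :=
  PX ⊗ₖ ((1 : Matrix (Fin 2) (Fin 2) ℂ) ⊗ₖ (1 : Matrix (Fin 2) (Fin 2) ℂ))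
    + (1 : Matrix (Fin 2) (Fin 2) ℂ) ⊗ₖ (PX ⊗ₖ (1 : Matrix (Fin 2) (Fin 2) ℂ))
    + (1 : Matrix (Fin 2) (Fin 2) ℂ) ⊗ₖ ((1 : Matrix (Fin 2) (Fin 2) ℂ) ⊗ₖ PX)
def Sy3 : Matrix (Fin 2 × (Fin 2 × Fin 2)) (Fin 2 × (Fin 2 × Fin 2)) ℂ :=
  PY ⊗ₖ ((1 : Matrix (Fin 2) (Fin 2) ℂ) ⊗ₖ (1 : Matrix (Fin 2) (Fin 2) ℂ))
    + (1 : Matrix (Fin 2) (Fin 2) ℂ) ⊗ₖ (PY ⊗ₖ (1 : Matrix (Fin 2) (Fin 2) ℂ))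
    + (1 : Matrix (Fin 2) (Fin 2) ℂ) ⊗ₖ ((1 : Matrix (Fin 2) (Fin 2) ℂ) ⊗ₖ PY)

/-- The three-qubit Mølmer–Sørensen gates `U_{X²}(π/2)` and `U_{Y²}(π/2)`. -/
noncomputable def UX2 : Matrix (Fin 2 × (Fin 2 × Fin 2)) (Fin 2 × (Fin 2 × Fin 2)) ℂ :=
  NormedSpace.exp ((-(Complex.I) * (Real.pi / 8)) • (Sx3 * Sx3))
noncomputable def UY2 : Matrix (Fin 2 × (Fin 2 × Fin 2)) (Fin 2 × (Fin 2 × Fin 2)) ℂ :=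
  NormedSpace.exp ((-(Complex.I) * (Real.pi / 8)) • (Sy3 * Sy3))

/-- The controlled gate `C_in = |0⟩⟨0| ⊗ Z₁ + |1⟩⟨1| ⊗ I₄`. -/
def Cin : Matrix (Fin 2 × (Fin 2 × Fin 2)) (Fin 2 × (Fin 2 × Fin 2)) ℂ :=
  single (0 : Fin 2) 0 (1 : ℂ) ⊗ₖ (PZ ⊗ₖ (1 : Matrix (Fin 2) (Fin 2) ℂ))
    + single (1 : Fin 2) 1 (1 : ℂ) ⊗ₖ (1 : Matrix (Fin 2 × Fin 2) (Fin 2 × Fin 2) ℂ)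

/-- The two cycles of the simplified pumping circuit (a single MS gate per cycle). -/
noncomputable def V1 : Matrix (Fin 2 × (Fin 2 × Fin 2)) (Fin 2 × (Fin 2 × Fin 2)) ℂ :=
  Cin * UX2
noncomputable def V2 : Matrix (Fin 2 × (Fin 2 × Fin 2)) (Fin 2 × (Fin 2 × Fin 2)) ℂ :=
  Cin * UY2

/-- Partial trace over the (first) ancilla factor: sum of the two diagonal blocks. -/
noncomputable def trAncilla
    (M : Matrix (Fin 2 × (Fin 2 × Fin 2)) (Fin 2 × (Fin 2 × Fin 2)) ℂ) :
    Matrix (Fin 2 × Fin 2) (Fin 2 × Fin 2) ℂ :=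
  Matrix.of fun i j => ∑ a : Fin 2, M (a, i) (a, j)

/-- One simplified control cycle: reset the ancilla to `|1⟩`, apply `V_j`, trace out
the ancilla. -/
noncomputable def F (V : Matrix (Fin 2 × (Fin 2 × Fin 2)) (Fin 2 × (Fin 2 × Fin 2)) ℂ)
    (ρ : Matrix (Fin 2 × Fin 2) (Fin 2 × Fin 2) ℂ) :
    Matrix (Fin 2 × Fin 2) (Fin 2 × Fin 2) ℂ :=
  trAncilla (V * (single (1 : Fin 2) 1 (1 : ℂ) ⊗ₖ ρ) * Vᴴ)

/-- The singlet Bell state `|Ψ⁻⟩ = (|01⟩ − |10⟩)/√2`. -/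
noncomputable def PsiM : Fin 2 × Fin 2 → ℂ := fun p =>
  ((if p = (0, 1) then 1 else 0) - (if p = (1, 0) then 1 else 0)) / (Real.sqrt 2 : ℂ)


/-!
Writing `F V ρ = ∑ₐ Kₐ ρ Kₐᴴ` with the Kraus operators `Kₐ = ⟨a|V|1⟩`, the two cycles compose
to a channel with the four Kraus operators `K'_b K_a`. Up to a global phase each MS gate equals
`(1 - K)/2`, with `K` the sum of the pairwise products `PᵢPⱼ`, since `S² = 1 + 8Π` for the
projector `Π = (1 + K)/4` onto total spin `±3`, and `exp (-iπ/8 · 8Π) = 1 - 2Π`.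
A computation in the Pauli algebra then shows that every `K'_b K_a` maps into the line spanned
by the singlet. As the `V_j` are unitary, `∑ (K'_b K_a)ᴴ (K'_b K_a) = 1`, and a trace-preserving
channel whose Kraus operators all map into the line of a unit vector `ψ` is `ρ ↦ tr ρ • |ψ⟩⟨ψ|`.
-/

theorem NormedSpace.exp_smul_of_isIdempotentElem {A : Type*} [NormedRing A] [NormedAlgebra ℂ A]
    [CompleteSpace A] {P : A} (hP : IsIdempotentElem P) (t : ℂ) :
    NormedSpace.exp (t • P) = 1 + (Complex.exp t - 1) • P := by
  have hscalar : HasSum (fun n : ℕ => ((n.factorial : ℂ)⁻¹ * t ^ n) • P) (Complex.exp t • P) := by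
    simpa only [Complex.exp_eq_exp_ℂ, smul_eq_mul] using
      (NormedSpace.exp_series_hasSum_exp' (𝕂 := ℂ) t).smul_const P
  refine (NormedSpace.exp_series_hasSum_exp' (𝕂 := ℂ) (t • P)).unique ?_
  convert hscalar.add (hasSum_ite_eq 0 (1 - P)) using 1
  · ext (_ | n)
    · simp
    · simp [smul_pow, hP.pow_succ_eq, smul_smul]
  · module

namespace Matrix

variable {m : Type*} [Fintype m] [DecidableEq m]

theorem exp_smul_of_isIdempotentElem {Q : Matrix m m ℂ} (hQ : IsIdempotentElem Q) (t : ℂ) :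
    NormedSpace.exp (t • Q) = 1 + (Complex.exp t - 1) • Q :=
  -- `NormedSpace.exp` depends only on the topology, so any Banach algebra norm will do.
  let _ : NormedRing (Matrix m m ℂ) := Matrix.linftyOpNormedRing
  let _ : NormedAlgebra ℂ (Matrix m m ℂ) := Matrix.linftyOpNormedAlgebra
  NormedSpace.exp_smul_of_isIdempotentElem hQ t

theorem exp_smul_mem_unitaryGroup {H : Matrix m m ℂ} (hH : H.IsHermitian) {c : ℂ}
    (hc : star c = -c) : NormedSpace.exp (c • H) ∈ unitaryGroup m ℂ := by
  rw [mem_unitaryGroup_iff', star_eq_conjTranspose, ← exp_conjTranspose, conjTranspose_smul,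
    hH.eq, hc, neg_smul, ← exp_add_of_commute _ _ (Commute.refl (c • H)).neg_left,
    neg_add_cancel, NormedSpace.exp_zero]

end Matrix

section Kraus

variable {ι κ n R : Type*} [CommRing R]

/-- The Kraus operator `⟨a|V|1⟩` of the channel `ρ ↦ tr_c (V (|1⟩⟨1| ⊗ ρ) Vᴴ)`. -/
def krausOp (V : Matrix (Fin 2 × n) (Fin 2 × n) R) (a : Fin 2) : Matrix n n R :=
  V.submatrix (Prod.mk a) (Prod.mk 1)

theorem krausOp_smul (c : R) (V : Matrix (Fin 2 × n) (Fin 2 × n) R) (a : Fin 2) :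
    krausOp (c • V) a = c • krausOp V a :=
  rfl

variable [Fintype ι] [Fintype κ] [Fintype n] [DecidableEq n] [StarRing R]

theorem sum_conjTranspose_krausOp_mul {V : Matrix (Fin 2 × n) (Fin 2 × n) R}
    (hV : V ∈ unitaryGroup (Fin 2 × n) R) : ∑ a, (krausOp V a)ᴴ * krausOp V a = 1 := by
  ext i j
  simpa [krausOp, Matrix.sum_apply, mul_apply, Fintype.sum_prod_type, Finset.sum_add_distrib, Finset.sum_comm (γ := Fin 2),
    one_apply] using congrFun (congrFun ((mem_unitaryGroup_iff' ..).mp hV) (1, i)) (1, j)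

theorem sum_conjTranspose_mul_prod_eq_one {K : ι → Matrix n n R} {L : κ → Matrix n n R}
    (hK : ∑ i, (K i)ᴴ * K i = 1) (hL : ∑ j, (L j)ᴴ * L j = 1) :
    ∑ p : ι × κ, (L p.2 * K p.1)ᴴ * (L p.2 * K p.1) = 1 := by
  simp only [Fintype.sum_prod_type, conjTranspose_mul, mul_assoc, ← Finset.mul_sum]
  simp only [← mul_assoc, ← Finset.sum_mul, hL, mul_one, hK]

theorem sum_mul_mul_conjTranspose_eq_trace_smul (K : ι → Matrix n n R) (ψ : n → R)
    (hψ : star ψ ⬝ᵥ ψ = 1) (hrange : ∀ i, vecMulVec ψ (star ψ) * K i = K i)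
    (hK : ∑ i, (K i)ᴴ * K i = 1) (ρ : Matrix n n R) :
    ∑ i, K i * ρ * (K i)ᴴ = ρ.trace • vecMulVec ψ (star ψ) := by
  set P := vecMulVec ψ (star ψ) with hP
  set M := ∑ i, K i * ρ * (K i)ᴴ
  have hPM : P * M = M := by simp only [M, Finset.mul_sum, ← mul_assoc, hrange]
  have hMP : M * P = M := by
    have hKP i : (K i)ᴴ * P = (K i)ᴴ := by
      rw [← conjTranspose_conjTranspose P, ← conjTranspose_mul, hP, conjTranspose_vecMulVec,
        star_star, ← hP, hrange]
    simp only [M, Finset.sum_mul, mul_assoc, hKP]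
  have htrace : M.trace = ρ.trace := by
    rw [trace_sum]
    simp only [trace_mul_cycle _ ρ]
    rw [← trace_sum, ← Finset.sum_mul, hK, one_mul]
  set c := (star ψ ᵥ* M) ⬝ᵥ ψ
  have hM : M = c • P := by
    calc M = P * M * P := by rw [hPM, hMP]
      _ = c • P := by rw [hP, vecMulVec_mul, vecMulVec_mul_vecMulVec, vecMulVec_smul]
  have hc : c = ρ.trace := by
    rw [← htrace, hM, trace_smul, hP, trace_vecMulVec, dotProduct_comm, hψ, smul_eq_mul, mul_one]
  rw [hM, hc]

end Kraus

theorem F_eq_sum_krausOp (V : Matrix (Fin 2 × (Fin 2 × Fin 2)) (Fin 2 × (Fin 2 × Fin 2)) ℂ)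
    (ρ : Matrix (Fin 2 × Fin 2) (Fin 2 × Fin 2) ℂ) :
    F V ρ = ∑ a, krausOp V a * ρ * (krausOp V a)ᴴ := by
  ext i j
  simp [F, trAncilla, krausOp, Matrix.sum_apply, mul_apply, Fintype.sum_prod_type, single_apply]

theorem F_F_eq_sum_krausOp (V W : Matrix (Fin 2 × (Fin 2 × Fin 2)) (Fin 2 × (Fin 2 × Fin 2)) ℂ)
    (ρ : Matrix (Fin 2 × Fin 2) (Fin 2 × Fin 2) ℂ) :
    F W (F V ρ) = ∑ p : Fin 2 × Fin 2,
      (krausOp W p.2 * krausOp V p.1) * ρ * (krausOp W p.2 * krausOp V p.1)ᴴ := by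
  rw [F_eq_sum_krausOp, F_eq_sum_krausOp, Fintype.sum_prod_type, Finset.sum_comm]
  simp only [Finset.mul_sum, Finset.sum_mul, conjTranspose_mul, mul_assoc]

theorem PX_mul_self : PX * PX = 1 := by ext i j; fin_cases i <;> fin_cases j <;> simp [PX]
theorem PY_mul_self : PY * PY = 1 := by ext i j; fin_cases i <;> fin_cases j <;> simp [PY]
theorem PZ_mul_self : PZ * PZ = 1 := by ext i j; fin_cases i <;> fin_cases j <;> simp [PZ]
theorem PX_mul_PY : PX * PY = Complex.I • PZ := by
  ext i j; fin_cases i <;> fin_cases j <;> simp [PX, PY, PZ]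
theorem PY_mul_PX : PY * PX = -Complex.I • PZ := by
  ext i j; fin_cases i <;> fin_cases j <;> simp [PX, PY, PZ]
theorem PY_mul_PZ : PY * PZ = Complex.I • PX := by
  ext i j; fin_cases i <;> fin_cases j <;> simp [PX, PY, PZ]
theorem PZ_mul_PY : PZ * PY = -Complex.I • PX := by
  ext i j; fin_cases i <;> fin_cases j <;> simp [PX, PY, PZ]
theorem PZ_mul_PX : PZ * PX = Complex.I • PY := by
  ext i j; fin_cases i <;> fin_cases j <;> simp [PX, PY, PZ]
theorem PX_mul_PZ : PX * PZ = -Complex.I • PY := by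
  ext i j; fin_cases i <;> fin_cases j <;> simp [PX, PY, PZ]

theorem isHermitian_PX : PX.IsHermitian := by
  ext i j; fin_cases i <;> fin_cases j <;> simp [PX]
theorem isHermitian_PY : PY.IsHermitian := by
  ext i j; fin_cases i <;> fin_cases j <;> simp [PY]
theorem isHermitian_PZ : PZ.IsHermitian := by
  ext i j; fin_cases i <;> fin_cases j <;> simp [PZ]

section CollectiveSpin

variable (P : Matrix (Fin 2) (Fin 2) ℂ)

def totalSpin : Matrix (Fin 2 × (Fin 2 × Fin 2)) (Fin 2 × (Fin 2 × Fin 2)) ℂ :=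
  P ⊗ₖ (1 ⊗ₖ 1) + 1 ⊗ₖ (P ⊗ₖ 1) + 1 ⊗ₖ (1 ⊗ₖ P)

def pairSum : Matrix (Fin 2 × (Fin 2 × Fin 2)) (Fin 2 × (Fin 2 × Fin 2)) ℂ :=
  P ⊗ₖ (P ⊗ₖ 1) + P ⊗ₖ (1 ⊗ₖ P) + 1 ⊗ₖ (P ⊗ₖ P)

/-- The MS gate `exp (-i (π/8) S²)` up to its global phase `exp (-iπ/8)`. -/
noncomputable def msGate : Matrix (Fin 2 × (Fin 2 × Fin 2)) (Fin 2 × (Fin 2 × Fin 2)) ℂ :=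
  (2 : ℂ)⁻¹ • (1 - pairSum P)

variable {P}

theorem totalSpin_mul_self (hP : P * P = 1) :
    totalSpin P * totalSpin P = (3 : ℂ) • 1 + (2 : ℂ) • pairSum P := by
  simp only [totalSpin, pairSum, add_mul, mul_add, ← mul_kronecker_mul, one_mul, mul_one, hP,
    one_kronecker_one]
  module

theorem pairSum_mul_self (hP : P * P = 1) :
    pairSum P * pairSum P = (3 : ℂ) • 1 + (2 : ℂ) • pairSum P := by
  simp only [pairSum, add_mul, mul_add, ← mul_kronecker_mul, one_mul, mul_one, hP,
    one_kronecker_one]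
  module

theorem isHermitian_totalSpin (hP : P.IsHermitian) : (totalSpin P).IsHermitian := by
  simp only [IsHermitian, totalSpin, conjTranspose_add, conjTranspose_kronecker,
    conjTranspose_one, hP.eq]

theorem exp_totalSpin_sq (hP : P * P = 1) :
    NormedSpace.exp ((-(Complex.I) * (Real.pi / 8)) • (totalSpin P * totalSpin P))
      = Complex.exp (-(Complex.I) * (Real.pi / 8)) • msGate P := by
  set t : ℂ := -(Complex.I) * (Real.pi / 8)
  set Q := (4 : ℂ)⁻¹ • (1 + pairSum P)
  have hQ : IsIdempotentElem Q := by
    simp only [IsIdempotentElem, Q, smul_mul_smul_comm, add_mul, mul_add, one_mul, mul_one,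
      pairSum_mul_self hP]
    module
  have hsplit : t • (totalSpin P * totalSpin P) = t • 1 + (8 * t) • Q := by
    rw [totalSpin_mul_self hP]; simp only [Q]; module
  have h8 : Complex.exp (8 * t) = -1 := by
    rw [show 8 * t = -(Real.pi * Complex.I) by simp only [t]; ring, Complex.exp_neg,
      Complex.exp_pi_mul_I]
    norm_num
  have hscalar : (1 : Matrix (Fin 2 × (Fin 2 × Fin 2)) (Fin 2 × (Fin 2 × Fin 2)) ℂ)
      + (Complex.exp t - 1) • 1 = Complex.exp t • 1 := by module
  rw [hsplit, Matrix.exp_add_of_commute _ _ ((Commute.one_left Q).smul_left _ |>.smul_right _),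
    exp_smul_of_isIdempotentElem IsIdempotentElem.one, exp_smul_of_isIdempotentElem hQ, h8,
    hscalar, smul_mul_assoc, one_mul]
  simp only [msGate, Q]
  module

theorem exp_totalSpin_sq_mem_unitaryGroup (hP : P.IsHermitian) :
    NormedSpace.exp ((-(Complex.I) * (Real.pi / 8)) • (totalSpin P * totalSpin P))
      ∈ unitaryGroup (Fin 2 × (Fin 2 × Fin 2)) ℂ := by
  refine exp_smul_mem_unitaryGroup ?_ (by simp [Complex.conj_ofReal])
  simpa only [sq] using (isHermitian_totalSpin hP).pow 2

end CollectiveSpin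

theorem Cin_mem_unitaryGroup : Cin ∈ unitaryGroup (Fin 2 × (Fin 2 × Fin 2)) ℂ := by
  have hsum : single (0 : Fin 2) (0 : Fin 2) (1 : ℂ) + single 1 1 1 = 1 := by
    ext i j; fin_cases i <;> fin_cases j <;> simp
  rw [mem_unitaryGroup_iff', star_eq_conjTranspose]
  simp only [Cin, conjTranspose_add, conjTranspose_kronecker, conjTranspose_single, star_one,
    isHermitian_PZ.eq, conjTranspose_one, add_mul, mul_add, ← mul_kronecker_mul,
    single_mul_single_same, single_mul_single_of_ne, ne_eq, zero_ne_one, one_ne_zero,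
    not_false_eq_true, mul_one, one_mul, PZ_mul_self, zero_kronecker, add_zero, zero_add,
    one_kronecker_one, ← add_kronecker, hsum]

theorem V1_mem_unitaryGroup : V1 ∈ unitaryGroup (Fin 2 × (Fin 2 × Fin 2)) ℂ :=
  mul_mem Cin_mem_unitaryGroup (exp_totalSpin_sq_mem_unitaryGroup isHermitian_PX)

theorem V2_mem_unitaryGroup : V2 ∈ unitaryGroup (Fin 2 × (Fin 2 × Fin 2)) ℂ :=
  mul_mem Cin_mem_unitaryGroup (exp_totalSpin_sq_mem_unitaryGroup isHermitian_PY)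

theorem V1_eq_smul : V1 = Complex.exp (-(Complex.I) * (Real.pi / 8)) • (Cin * msGate PX) := by
  rw [V1, UX2, show Sx3 = totalSpin PX from rfl, exp_totalSpin_sq PX_mul_self, Matrix.mul_smul]

theorem V2_eq_smul : V2 = Complex.exp (-(Complex.I) * (Real.pi / 8)) • (Cin * msGate PY) := by
  rw [V2, UY2, show Sy3 = totalSpin PY from rfl, exp_totalSpin_sq PY_mul_self, Matrix.mul_smul]

theorem krausOp_Cin_mul_msGate_zero (P : Matrix (Fin 2) (Fin 2) ℂ) :
    krausOp (Cin * msGate P) 0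
      = -(P 0 1 / 2) • ((PZ ⊗ₖ (1 : Matrix (Fin 2) (Fin 2) ℂ)) * (P ⊗ₖ 1 + 1 ⊗ₖ P)) := by
  ext ⟨i, j⟩ ⟨k, l⟩
  fin_cases i <;> fin_cases j <;> fin_cases k <;> fin_cases l <;>
    simp [krausOp, Cin, msGate, pairSum, PZ, mul_apply, Fintype.sum_prod_type, single_apply,
      one_apply] <;> ring

theorem krausOp_Cin_mul_msGate_one (P : Matrix (Fin 2) (Fin 2) ℂ) :
    krausOp (Cin * msGate P) 1
      = (2 : ℂ)⁻¹ • (1 - P ⊗ₖ P) - (P 1 1 / 2) • (P ⊗ₖ 1 + 1 ⊗ₖ P) := by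
  ext ⟨i, j⟩ ⟨k, l⟩
  fin_cases i <;> fin_cases j <;> fin_cases k <;> fin_cases l <;>
    simp [krausOp, Cin, msGate, pairSum, PZ, mul_apply, Fintype.sum_prod_type, single_apply,
      one_apply] <;> ring

theorem inv_sqrt_two_mul_inv_sqrt_two :
    ((Real.sqrt 2 : ℝ) : ℂ)⁻¹ * ((Real.sqrt 2 : ℝ) : ℂ)⁻¹ = 2⁻¹ := by
  rw [← mul_inv, ← Complex.ofReal_mul, Real.mul_self_sqrt zero_le_two, Complex.ofReal_ofNat]

theorem star_PsiM_dotProduct_PsiM : star PsiM ⬝ᵥ PsiM = 1 := by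
  norm_num [dotProduct, Fintype.sum_prod_type, PsiM, Complex.conj_ofReal, div_eq_mul_inv,
    inv_sqrt_two_mul_inv_sqrt_two]

theorem vecMulVec_PsiM : vecMulVec PsiM (star PsiM)
    = (4 : ℂ)⁻¹ • (1 - PX ⊗ₖ PX - PY ⊗ₖ PY - PZ ⊗ₖ PZ) := by
  ext ⟨i, j⟩ ⟨k, l⟩
  fin_cases i <;> fin_cases j <;> fin_cases k <;> fin_cases l <;>
    simp [vecMulVec_apply, PsiM, PX, PY, PZ, one_apply, Complex.conj_ofReal,
      div_eq_mul_inv, inv_sqrt_two_mul_inv_sqrt_two] <;> ring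

theorem singlet_mul_krausOp_mul_krausOp (a b : Fin 2) :
    vecMulVec PsiM (star PsiM) * (krausOp (Cin * msGate PY) b * krausOp (Cin * msGate PX) a)
      = krausOp (Cin * msGate PY) b * krausOp (Cin * msGate PX) a := by
  have hX01 : PX 0 1 = 1 := rfl
  have hX11 : PX 1 1 = 0 := rfl
  have hY01 : PY 0 1 = -Complex.I := rfl
  have hY11 : PY 1 1 = 0 := rfl
  rw [vecMulVec_PsiM]
  fin_cases a <;> fin_cases b <;>
    simp only [Fin.zero_eta, Fin.mk_one, krausOp_Cin_mul_msGate_zero, krausOp_Cin_mul_msGate_one,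
      hX01, hX11, hY01, hY11] <;>
    simp only [sub_eq_add_neg, neg_mul, mul_neg, smul_neg, mul_add, add_mul, Matrix.smul_mul,
      Matrix.mul_smul, smul_add, ← mul_kronecker_mul, one_mul, mul_one, PX_mul_self, PY_mul_self,
      PZ_mul_self, PX_mul_PY, PY_mul_PX, PY_mul_PZ, PZ_mul_PY, PZ_mul_PX, PX_mul_PZ,
      smul_kronecker, kronecker_smul, smul_smul, one_kronecker_one] <;>
    match_scalars <;> grind [Complex.I_mul_I]

theorem singlet_mul_krausOp_V2_mul_krausOp_V1 (p : Fin 2 × Fin 2) :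
    vecMulVec PsiM (star PsiM) * (krausOp V2 p.2 * krausOp V1 p.1)
      = krausOp V2 p.2 * krausOp V1 p.1 := by
  rw [V1_eq_smul, V2_eq_smul, krausOp_smul, krausOp_smul, Matrix.smul_mul, Matrix.mul_smul,
    Matrix.mul_smul, Matrix.mul_smul, singlet_mul_krausOp_mul_krausOp]

theorem simplified_Bell_state_pumping_general (ρ : Matrix (Fin 2 × Fin 2) (Fin 2 × Fin 2) ℂ)
    (hρtr : ρ.trace = 1) :
    F V2 (F V1 ρ) = vecMulVec PsiM (star PsiM) := by
  rw [F_F_eq_sum_krausOp, sum_mul_mul_conjTranspose_eq_trace_smul _ PsiM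
    star_PsiM_dotProduct_PsiM singlet_mul_krausOp_V2_mul_krausOp_V1
    (sum_conjTranspose_mul_prod_eq_one (sum_conjTranspose_krausOp_mul V1_mem_unitaryGroup)
      (sum_conjTranspose_krausOp_mul V2_mem_unitaryGroup)), hρtr, one_smul]

/-- The simplified Bell-state pumping protocol of Barreiro et al. (Fig. 2): two
cycles, each consisting of a single MS gate followed by the controlled gate `C_in`
with the ancilla reset to `|1⟩` and then traced out, deterministically prepare the
singlet `|Ψ⁻⟩⟨Ψ⁻|` from an arbitrary two-qubit density matrix. -/
theorem simplified_Bell_state_pumping (ρ : Matrix (Fin 2 × Fin 2) (Fin 2 × Fin 2) ℂ)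
    (hρ : ρ.PosSemidef) (hρtr : ρ.trace = 1) :
    F V2 (F V1 ρ) = vecMulVec PsiM (star PsiM) :=
  simplified_Bell_state_pumping_general ρ hρtr
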